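/- For real numbers t₁, t₂, t₃ ∈ [0,1], the conditions |t₁ - t₂| ≤ t₃ ≤ t₁ + t₂ and t₁ + t₂ + t₃ ≤ 2 hold if and only if there exist angles θ₁, θ₂, θ₃ ∈ [0,π] with θᵢ = πtᵢ such that matrices A₁, A₂, A₃ ∈ SU(2) with trace 2cos(θᵢ) can satisfy A₁A₂A₃ = I; in particular, if A₁A₂A₃ = I in SU(2) and tᵢ = (1/π)arccos(tr(Aᵢ)/2), then (t₁,t₂,t₃) ∈ Δ_Θ. -/

import Mathlib

open Matrix

noncomputable def goldman (A : Matrix.specialUnitaryGroup (Fin 2) ℂ) : ℝ :=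
  Real.arccos ((Matrix.trace (A : Matrix (Fin 2) (Fin 2) ℂ)).re / 2) / Real.pi

def inDeltaTheta (t : Fin 3 → ℝ) : Prop :=
  (∀ i, 0 ≤ t i ∧ t i ≤ 1) ∧ t 2 ≤ t 0 + t 1 ∧ t 0 ≤ t 1 + t 2 ∧
    t 1 ≤ t 0 + t 2 ∧ t 0 + t 1 + t 2 ≤ 2

open Complex in

lemma su2_entries {X : Matrix (Fin 2) (Fin 2) ℂ}
    (h : X ∈ Matrix.specialUnitaryGroup (Fin 2) ℂ) :
    X 1 1 = (starRingEnd ℂ) (X 0 0) ∧ X 1 0 = -(starRingEnd ℂ) (X 0 1) ∧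
      Complex.normSq (X 0 0) + Complex.normSq (X 0 1) = 1 := by
  rw [Matrix.mem_specialUnitaryGroup_iff] at h
  obtain ⟨hu, hd⟩ := h
  have h1 : X * star X = 1 := (Matrix.mem_unitaryGroup_iff).mp hu
  have h2 : star X * X = 1 := (Matrix.mem_unitaryGroup_iff').mp hu
  have hinv : X⁻¹ = star X := Matrix.inv_eq_left_inv h2
  have hadj : X⁻¹ = X.adjugate := by
    rw [Matrix.inv_def, hd, Ring.inverse_one, one_smul]
  have hstar : star X = X.adjugate := by rw [← hinv, hadj]
  have e00 : (star X) 0 0 = X.adjugate 0 0 := by rw [hstar]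
  have e01 : (star X) 0 1 = X.adjugate 0 1 := by rw [hstar]
  rw [Matrix.star_eq_conjTranspose, Matrix.conjTranspose_apply, Matrix.adjugate_fin_two] at e00 e01
  simp only [Matrix.cons_val', Matrix.cons_val_zero, Matrix.cons_val_one, Matrix.head_cons,
    Matrix.empty_val', Matrix.cons_val_fin_one, Matrix.head_fin_const, Matrix.of_apply] at e00 e01
  refine ⟨?_, ?_, ?_⟩
  · rw [← e00]; simp
  · have := congrArg (starRingEnd ℂ) e01
    simpa using this
  · have := congrFun (congrFun h1 0) 0
    rw [Matrix.mul_apply, Fin.sum_univ_two] at this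
    simp only [Matrix.star_eq_conjTranspose, Matrix.conjTranspose_apply, Matrix.one_apply_eq] at this
    have := congrArg Complex.re this
    simpa [Complex.mul_conj] using this


lemma aux_arccos {c₁ c₂ c₃ : ℝ} (h₁ : |c₁| ≤ 1) (h₂ : |c₂| ≤ 1)
    (h : (c₃ - c₁ * c₂) ^ 2 ≤ (1 - c₁ ^ 2) * (1 - c₂ ^ 2)) :
    Real.cos (Real.arccos c₁ + Real.arccos c₂) ≤ c₃ ∧ -1 ≤ c₃ ∧ c₃ ≤ 1 := by
  obtain ⟨h₁', h₁''⟩ := abs_le.mp h₁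
  obtain ⟨h₂', h₂''⟩ := abs_le.mp h₂
  have hs₁ : Real.sin (Real.arccos c₁) = Real.sqrt (1 - c₁ ^ 2) := Real.sin_arccos c₁
  have hs₂ : Real.sin (Real.arccos c₂) = Real.sqrt (1 - c₂ ^ 2) := Real.sin_arccos c₂
  have hm : c₁ * c₂ ≤ 1 := by nlinarith
  have hm' : -1 ≤ c₁ * c₂ := by nlinarith
  have key1 : (c₃ - c₁ * c₂) ^ 2 ≤ (1 - c₁ * c₂) ^ 2 := by nlinarith [sq_nonneg (c₁ - c₂)]
  have key2 : (c₃ - c₁ * c₂) ^ 2 ≤ (1 + c₁ * c₂) ^ 2 := by nlinarith [sq_nonneg (c₁ + c₂)]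
  refine ⟨?_, by nlinarith [key2], by nlinarith [key1]⟩
  rw [Real.cos_add, Real.cos_arccos h₁' h₁'', Real.cos_arccos h₂' h₂'', hs₁, hs₂]
  have hsq : Real.sqrt (1 - c₁ ^ 2) * Real.sqrt (1 - c₂ ^ 2) =
      Real.sqrt ((1 - c₁ ^ 2) * (1 - c₂ ^ 2)) := (Real.sqrt_mul (by nlinarith) _).symm
  rw [hsq]
  have h5 : |c₃ - c₁ * c₂| ≤ Real.sqrt ((1 - c₁ ^ 2) * (1 - c₂ ^ 2)) := by
    rw [← Real.sqrt_sq_eq_abs]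
    exact Real.sqrt_le_sqrt h
  have := (abs_le.mp h5).1
  linarith

lemma tri_arccos {c₁ c₂ c₃ : ℝ} (h₁ : |c₁| ≤ 1) (h₂ : |c₂| ≤ 1)
    (h : (c₃ - c₁ * c₂) ^ 2 ≤ (1 - c₁ ^ 2) * (1 - c₂ ^ 2)) :
    Real.arccos c₃ ≤ Real.arccos c₁ + Real.arccos c₂ := by
  obtain ⟨hkey, h₃', h₃''⟩ := aux_arccos h₁ h₂ h
  rcases le_or_gt Real.pi (Real.arccos c₁ + Real.arccos c₂) with hpi | hpi
  · exact (Real.arccos_le_pi c₃).trans hpi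
  · by_contra hc
    push_neg at hc
    have hlt : Real.cos (Real.arccos c₃) < Real.cos (Real.arccos c₁ + Real.arccos c₂) :=
      Real.cos_lt_cos_of_nonneg_of_le_pi
        (by have := Real.arccos_nonneg c₁; have := Real.arccos_nonneg c₂; linarith)
        (Real.arccos_le_pi c₃) hc
    rw [Real.cos_arccos h₃' h₃''] at hlt
    linarith

lemma sum_arccos {c₁ c₂ c₃ : ℝ} (h₁ : |c₁| ≤ 1) (h₂ : |c₂| ≤ 1)
    (h : (c₃ - c₁ * c₂) ^ 2 ≤ (1 - c₁ ^ 2) * (1 - c₂ ^ 2)) :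
    Real.arccos c₁ + Real.arccos c₂ + Real.arccos c₃ ≤ 2 * Real.pi := by
  obtain ⟨hkey, h₃', h₃''⟩ := aux_arccos h₁ h₂ h
  rcases le_or_gt (Real.arccos c₁ + Real.arccos c₂) Real.pi with hpi | hpi
  · have := Real.arccos_le_pi c₃; linarith
  · by_contra hc
    push_neg at hc
    have hball : Real.cos (2 * Real.pi - (Real.arccos c₁ + Real.arccos c₂)) =
        Real.cos (Real.arccos c₁ + Real.arccos c₂) := by
      rw [Real.cos_sub, Real.cos_two_pi, Real.sin_two_pi]; ring
    have hlt : Real.cos (Real.arccos c₃) <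
        Real.cos (2 * Real.pi - (Real.arccos c₁ + Real.arccos c₂)) := by
      apply Real.cos_lt_cos_of_nonneg_of_le_pi
      · have := Real.arccos_le_pi c₁; have := Real.arccos_le_pi c₂; linarith
      · exact Real.arccos_le_pi c₃
      · linarith
    rw [Real.cos_arccos h₃' h₃'', hball] at hlt
    linarith


lemma delta_to_ineq {θ₁ θ₂ θ₃ : ℝ} (h1 : 0 ≤ θ₁) (h1' : θ₁ ≤ Real.pi)
    (h2 : 0 ≤ θ₂) (h2' : θ₂ ≤ Real.pi) (h3 : 0 ≤ θ₃) (h3' : θ₃ ≤ Real.pi)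
    (t1 : θ₃ ≤ θ₁ + θ₂) (t2 : θ₁ ≤ θ₂ + θ₃) (t3 : θ₂ ≤ θ₁ + θ₃)
    (ts : θ₁ + θ₂ + θ₃ ≤ 2 * Real.pi) :
    (Real.cos θ₃ - Real.cos θ₁ * Real.cos θ₂) ^ 2 ≤
      (1 - Real.cos θ₁ ^ 2) * (1 - Real.cos θ₂ ^ 2) := by
  have hs1 : Real.sin θ₁ ^ 2 = 1 - Real.cos θ₁ ^ 2 := Real.sin_sq θ₁
  have hs2 : Real.sin θ₂ ^ 2 = 1 - Real.cos θ₂ ^ 2 := Real.sin_sq θ₂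
  have hsn1 : 0 ≤ Real.sin θ₁ := Real.sin_nonneg_of_nonneg_of_le_pi h1 h1'
  have hsn2 : 0 ≤ Real.sin θ₂ := Real.sin_nonneg_of_nonneg_of_le_pi h2 h2'
  -- upper bound: cos θ₃ ≤ cos (θ₁ - θ₂)
  have hub : Real.cos θ₃ ≤ Real.cos θ₁ * Real.cos θ₂ + Real.sin θ₁ * Real.sin θ₂ := by
    have : Real.cos θ₃ ≤ Real.cos (θ₁ - θ₂) := by
      rcases le_total θ₂ θ₁ with hle | hle
      · exact Real.cos_le_cos_of_nonneg_of_le_pi (by linarith) h3' (by linarith)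
      · rw [show θ₁ - θ₂ = -(θ₂ - θ₁) by ring, Real.cos_neg]
        exact Real.cos_le_cos_of_nonneg_of_le_pi (by linarith) h3' (by linarith)
    rwa [Real.cos_sub] at this
  -- lower bound: cos θ₃ ≥ cos (θ₁ + θ₂)
  have hlb : Real.cos θ₁ * Real.cos θ₂ - Real.sin θ₁ * Real.sin θ₂ ≤ Real.cos θ₃ := by
    have : Real.cos (θ₁ + θ₂) ≤ Real.cos θ₃ := by
      rcases le_total (θ₁ + θ₂) Real.pi with hle | hle
      · exact Real.cos_le_cos_of_nonneg_of_le_pi h3 hle t1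
      · have hball : Real.cos (2 * Real.pi - (θ₁ + θ₂)) = Real.cos (θ₁ + θ₂) := by
          rw [Real.cos_sub, Real.cos_two_pi, Real.sin_two_pi]; ring
        rw [← hball]
        exact Real.cos_le_cos_of_nonneg_of_le_pi h3 (by linarith) (by linarith)
    rwa [Real.cos_add] at this
  nlinarith [mul_nonneg hsn1 hsn2]

open Complex in

lemma su2_construct {c₁ c₂ c₃ : ℝ} (h1 : |c₁| ≤ 1) (h2 : |c₂| ≤ 1)
    (h : (c₃ - c₁ * c₂) ^ 2 ≤ (1 - c₁ ^ 2) * (1 - c₂ ^ 2)) :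
    ∃ A₁ A₂ A₃ : Matrix.specialUnitaryGroup (Fin 2) ℂ, A₁ * A₂ * A₃ = 1 ∧
      Matrix.trace (A₁ : Matrix (Fin 2) (Fin 2) ℂ) = ((2 * c₁ : ℝ) : ℂ) ∧
      Matrix.trace (A₂ : Matrix (Fin 2) (Fin 2) ℂ) = ((2 * c₂ : ℝ) : ℂ) ∧
      Matrix.trace (A₃ : Matrix (Fin 2) (Fin 2) ℂ) = ((2 * c₃ : ℝ) : ℂ) := by
  obtain ⟨h1', h1''⟩ := abs_le.mp h1
  obtain ⟨h2', h2''⟩ := abs_le.mp h2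
  have hc₁sq : (0:ℝ) ≤ 1 - c₁ ^ 2 := by nlinarith
  have hc₂sq : (0:ℝ) ≤ 1 - c₂ ^ 2 := by nlinarith
  obtain ⟨s₁, hs₁n, hs₁sq⟩ : ∃ s : ℝ, 0 ≤ s ∧ s ^ 2 = 1 - c₁ ^ 2 :=
    ⟨Real.sqrt (1 - c₁ ^ 2), Real.sqrt_nonneg _, Real.sq_sqrt hc₁sq⟩
  obtain ⟨s₂, hs₂n, hs₂sq⟩ : ∃ s : ℝ, 0 ≤ s ∧ s ^ 2 = 1 - c₂ ^ 2 :=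
    ⟨Real.sqrt (1 - c₂ ^ 2), Real.sqrt_nonneg _, Real.sq_sqrt hc₂sq⟩
  obtain ⟨u, hsu, husq⟩ : ∃ u : ℝ, s₁ * u = c₁ * c₂ - c₃ ∧ u ^ 2 ≤ s₂ ^ 2 := by
    by_cases hz : s₁ = 0
    · refine ⟨0, ?_, by nlinarith⟩
      have hz2 : (1 : ℝ) - c₁ ^ 2 = 0 := by rw [← hs₁sq, hz]; ring
      have hle : (c₃ - c₁ * c₂) ^ 2 ≤ 0 := by rw [hz2] at h; linarith [h]
      nlinarith [sq_nonneg (c₃ - c₁ * c₂)]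
    · have hpos : 0 < s₁ := lt_of_le_of_ne hs₁n (Ne.symm hz)
      refine ⟨(c₁ * c₂ - c₃) / s₁, by field_simp, ?_⟩
      have hkey : (s₁ * ((c₁ * c₂ - c₃) / s₁)) ^ 2 ≤ s₁ ^ 2 * s₂ ^ 2 := by
        have : s₁ * ((c₁ * c₂ - c₃) / s₁) = c₁ * c₂ - c₃ := by field_simp
        rw [this, hs₁sq, hs₂sq]; nlinarith [h]
      have h2' : ((c₁ * c₂ - c₃) / s₁) ^ 2 * s₁ ^ 2 ≤ s₂ ^ 2 * s₁ ^ 2 := by nlinarith [hkey]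
      exact le_of_mul_le_mul_right h2' (by positivity)
  obtain ⟨v, hvsq⟩ : ∃ v : ℝ, v ^ 2 = s₂ ^ 2 - u ^ 2 :=
    ⟨Real.sqrt (s₂ ^ 2 - u ^ 2), Real.sq_sqrt (by linarith)⟩
  have hc1c : ((s₁ : ℂ)) ^ 2 = 1 - (c₁ : ℂ) ^ 2 := by
    exact_mod_cast congrArg (fun x : ℝ => (x : ℂ)) hs₁sq
  have hc2c : ((c₂ : ℂ)) ^ 2 + (u : ℂ) ^ 2 + (v : ℂ) ^ 2 = 1 := by
    have h0 : c₂ ^ 2 + u ^ 2 + v ^ 2 = 1 := by rw [hvsq, hs₂sq]; ring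
    exact_mod_cast congrArg (fun x : ℝ => (x : ℂ)) h0
  have hsuc : (s₁ : ℂ) * (u : ℂ) = (c₁ : ℂ) * (c₂ : ℂ) - (c₃ : ℂ) := by
    exact_mod_cast congrArg (fun x : ℝ => (x : ℂ)) hsu
  have hm₁ : !![(c₁ : ℂ) + s₁ * I, 0; 0, (c₁ : ℂ) - s₁ * I] ∈
      Matrix.specialUnitaryGroup (Fin 2) ℂ := by
    rw [Matrix.mem_specialUnitaryGroup_iff]
    constructor
    · rw [Matrix.mem_unitaryGroup_iff]
      ext i j
      fin_cases i <;> fin_cases j <;>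
        simp [Matrix.mul_apply, Fin.sum_univ_two, Matrix.star_eq_conjTranspose,
          Matrix.conjTranspose_apply, Matrix.one_apply]
      all_goals linear_combination (-(s₁:ℂ)^2) * Complex.I_sq + hc1c
    · rw [Matrix.det_fin_two]
      simp
      first
        | linear_combination (-(s₁:ℂ)^2) * Complex.I_sq + hc1c
        | linear_combination ((s₁:ℂ)^2) * Complex.I_sq - hc1c
        | ring1
  have hm₂ : !![(c₂ : ℂ) + u * I, v * I; v * I, (c₂ : ℂ) - u * I] ∈
      Matrix.specialUnitaryGroup (Fin 2) ℂ := by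
    rw [Matrix.mem_specialUnitaryGroup_iff]
    constructor
    · rw [Matrix.mem_unitaryGroup_iff]
      ext i j
      fin_cases i <;> fin_cases j <;>
        simp [Matrix.mul_apply, Fin.sum_univ_two, Matrix.star_eq_conjTranspose,
          Matrix.conjTranspose_apply, Matrix.one_apply]
      all_goals first
        | linear_combination (-(u:ℂ)^2 - (v:ℂ)^2) * Complex.I_sq + hc2c
        | ring1
    · rw [Matrix.det_fin_two]
      simp
      first
        | linear_combination (-(u:ℂ)^2 - (v:ℂ)^2) * Complex.I_sq + hc2c
        | linear_combination ((u:ℂ)^2 + (v:ℂ)^2) * Complex.I_sq - hc2c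
        | ring1
  set P : Matrix (Fin 2) (Fin 2) ℂ :=
    !![(c₁ : ℂ) + s₁ * I, 0; 0, (c₁ : ℂ) - s₁ * I] *
      !![(c₂ : ℂ) + u * I, v * I; v * I, (c₂ : ℂ) - u * I] with hP
  have hmP : P ∈ Matrix.specialUnitaryGroup (Fin 2) ℂ := mul_mem hm₁ hm₂
  have hm₃ : star P ∈ Matrix.specialUnitaryGroup (Fin 2) ℂ := by
    rw [Matrix.mem_specialUnitaryGroup_iff] at hmP ⊢
    refine ⟨(Matrix.mem_unitaryGroup_iff).mpr ?_, ?_⟩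
    · rw [star_star]
      exact (Matrix.mem_unitaryGroup_iff').mp hmP.1
    · rw [Matrix.star_eq_conjTranspose, Matrix.det_conjTranspose, hmP.2]
      simp
  refine ⟨⟨_, hm₁⟩, ⟨_, hm₂⟩, ⟨star P, hm₃⟩, ?_, ?_, ?_, ?_⟩
  · apply Subtype.ext
    show P * star P = 1
    exact (Matrix.mem_unitaryGroup_iff).mp ((Matrix.mem_specialUnitaryGroup_iff).mp hmP).1
  · show Matrix.trace !![(c₁ : ℂ) + s₁ * I, 0; 0, (c₁ : ℂ) - s₁ * I] = ((2 * c₁ : ℝ) : ℂ)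
    rw [Matrix.trace_fin_two]
    push_cast
    simp
    ring
  · show Matrix.trace !![(c₂ : ℂ) + u * I, v * I; v * I, (c₂ : ℂ) - u * I] = ((2 * c₂ : ℝ) : ℂ)
    rw [Matrix.trace_fin_two]
    push_cast
    simp
    ring
  · show Matrix.trace (star P) = ((2 * c₃ : ℝ) : ℂ)
    rw [Matrix.star_eq_conjTranspose, Matrix.trace_conjTranspose]
    have htr : Matrix.trace P = ((2 * c₃ : ℝ) : ℂ) := by
      rw [hP, Matrix.trace_fin_two]
      simp [Matrix.mul_apply, Fin.sum_univ_two]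
      push_cast
      linear_combination (2 * (s₁:ℂ) * (u:ℂ)) * Complex.I_sq - 2 * hsuc
    rw [htr]
    simp [← Complex.ofReal_mul]


set_option maxHeartbeats 2000000 in
theorem su2_triples_and_delta_theta :
    (∀ A₁ A₂ A₃ : Matrix.specialUnitaryGroup (Fin 2) ℂ,
        A₁ * A₂ * A₃ = 1 → inDeltaTheta ![goldman A₁, goldman A₂, goldman A₃]) ∧
      (∀ t : Fin 3 → ℝ, inDeltaTheta t →
        ∃ A₁ A₂ A₃ : Matrix.specialUnitaryGroup (Fin 2) ℂ, A₁ * A₂ * A₃ = 1 ∧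
          Matrix.trace (A₁ : Matrix (Fin 2) (Fin 2) ℂ) = (2 * Real.cos (Real.pi * t 0) : ℝ) ∧
          Matrix.trace (A₂ : Matrix (Fin 2) (Fin 2) ℂ) = (2 * Real.cos (Real.pi * t 1) : ℝ) ∧
          Matrix.trace (A₃ : Matrix (Fin 2) (Fin 2) ℂ) = (2 * Real.cos (Real.pi * t 2) : ℝ)) := by
  have hπ := Real.pi_pos
  constructor
  · -- forward direction
    intro A₁ A₂ A₃ hEq
    obtain ⟨e1a, e1b, e1c⟩ := su2_entries A₁.2
    obtain ⟨e2a, e2b, e2c⟩ := su2_entries A₂.2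
    obtain ⟨e3a, e3b, e3c⟩ := su2_entries A₃.2
    have hEq' : ((A₁ : Matrix (Fin 2) (Fin 2) ℂ) * (A₂ : Matrix (Fin 2) (Fin 2) ℂ)) *
        (A₃ : Matrix (Fin 2) (Fin 2) ℂ) = 1 := by
      have := congrArg Subtype.val hEq
      exact this
    have hM : (A₁ : Matrix (Fin 2) (Fin 2) ℂ) * (A₂ : Matrix (Fin 2) (Fin 2) ℂ) ∈
        Matrix.specialUnitaryGroup (Fin 2) ℂ := mul_mem A₁.2 A₂.2
    obtain ⟨a, ha⟩ : ∃ x : ℂ, (A₁ : Matrix (Fin 2) (Fin 2) ℂ) 0 0 = x := ⟨_, rfl⟩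
    obtain ⟨b, hb⟩ : ∃ x : ℂ, (A₁ : Matrix (Fin 2) (Fin 2) ℂ) 0 1 = x := ⟨_, rfl⟩
    obtain ⟨p, hp⟩ : ∃ x : ℂ, (A₂ : Matrix (Fin 2) (Fin 2) ℂ) 0 0 = x := ⟨_, rfl⟩
    obtain ⟨q, hq⟩ : ∃ x : ℂ, (A₂ : Matrix (Fin 2) (Fin 2) ℂ) 0 1 = x := ⟨_, rfl⟩
    obtain ⟨r, hr⟩ : ∃ x : ℂ, (A₃ : Matrix (Fin 2) (Fin 2) ℂ) 0 0 = x := ⟨_, rfl⟩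
    obtain ⟨w, hw⟩ : ∃ x : ℂ, (A₃ : Matrix (Fin 2) (Fin 2) ℂ) 0 1 = x := ⟨_, rfl⟩
    simp only [ha, hb] at e1a e1b e1c
    simp only [hp, hq] at e2a e2b e2c
    simp only [hr, hw] at e3a e3b e3c
    -- star M = A₃ (hA₃ below)
    have hA₃ : (A₃ : Matrix (Fin 2) (Fin 2) ℂ) =
        star ((A₁ : Matrix (Fin 2) (Fin 2) ℂ) * (A₂ : Matrix (Fin 2) (Fin 2) ℂ)) := by
      have hsm : star ((A₁ : Matrix (Fin 2) (Fin 2) ℂ) * (A₂ : Matrix (Fin 2) (Fin 2) ℂ)) *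
          ((A₁ : Matrix (Fin 2) (Fin 2) ℂ) * (A₂ : Matrix (Fin 2) (Fin 2) ℂ)) = 1 :=
        (Matrix.mem_unitaryGroup_iff').mp ((Matrix.mem_specialUnitaryGroup_iff).mp hM).1
      calc (A₃ : Matrix (Fin 2) (Fin 2) ℂ)
          = 1 * (A₃ : Matrix (Fin 2) (Fin 2) ℂ) := (one_mul _).symm
        _ = (star ((A₁ : Matrix (Fin 2) (Fin 2) ℂ) * (A₂ : Matrix (Fin 2) (Fin 2) ℂ)) *
              ((A₁ : Matrix (Fin 2) (Fin 2) ℂ) * (A₂ : Matrix (Fin 2) (Fin 2) ℂ))) *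
              (A₃ : Matrix (Fin 2) (Fin 2) ℂ) := by rw [hsm]
        _ = star ((A₁ : Matrix (Fin 2) (Fin 2) ℂ) * (A₂ : Matrix (Fin 2) (Fin 2) ℂ)) *
              (((A₁ : Matrix (Fin 2) (Fin 2) ℂ) * (A₂ : Matrix (Fin 2) (Fin 2) ℂ)) *
              (A₃ : Matrix (Fin 2) (Fin 2) ℂ)) := by rw [mul_assoc]
        _ = star ((A₁ : Matrix (Fin 2) (Fin 2) ℂ) * (A₂ : Matrix (Fin 2) (Fin 2) ℂ)) := by
              rw [hEq', mul_one]
    -- traces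
    have htr1 : Matrix.trace (A₁ : Matrix (Fin 2) (Fin 2) ℂ) = a + (starRingEnd ℂ) a := by
      rw [Matrix.trace_fin_two, e1a, ha]
    have htr2 : Matrix.trace (A₂ : Matrix (Fin 2) (Fin 2) ℂ) = p + (starRingEnd ℂ) p := by
      rw [Matrix.trace_fin_two, e2a, hp]
    have htr3 : Matrix.trace (A₃ : Matrix (Fin 2) (Fin 2) ℂ) = r + (starRingEnd ℂ) r := by
      rw [Matrix.trace_fin_two, e3a, hr]
    have htrM : Matrix.trace ((A₁ : Matrix (Fin 2) (Fin 2) ℂ) * (A₂ : Matrix (Fin 2) (Fin 2) ℂ)) =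
        a * p + b * (-(starRingEnd ℂ) q) + (-(starRingEnd ℂ) b) * q +
          (starRingEnd ℂ) a * ((starRingEnd ℂ) p) := by
      rw [Matrix.trace_fin_two]
      simp only [Matrix.mul_apply, Fin.sum_univ_two]
      rw [ha, hb, hp, hq, e1a, e1b, e2a, e2b]
      ring
    have htr3M : Matrix.trace (A₃ : Matrix (Fin 2) (Fin 2) ℂ) =
        star (Matrix.trace ((A₁ : Matrix (Fin 2) (Fin 2) ℂ) * (A₂ : Matrix (Fin 2) (Fin 2) ℂ))) := by
      rw [hA₃, Matrix.star_eq_conjTranspose, Matrix.trace_conjTranspose]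
    -- real components
    have hre3 : 2 * r.re = 2 * (a.re * p.re - a.im * p.im - (b.re * q.re + b.im * q.im)) := by
      have h1 : (Matrix.trace (A₃ : Matrix (Fin 2) (Fin 2) ℂ)).re = 2 * r.re := by
        rw [htr3]; simp [Complex.add_re, Complex.conj_re]; ring
      have h2 : (Matrix.trace (A₃ : Matrix (Fin 2) (Fin 2) ℂ)).re =
          2 * (a.re * p.re - a.im * p.im - (b.re * q.re + b.im * q.im)) := by
        rw [htr3M]
        have : (star (Matrix.trace ((A₁ : Matrix (Fin 2) (Fin 2) ℂ) *
            (A₂ : Matrix (Fin 2) (Fin 2) ℂ)))).re =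
            (Matrix.trace ((A₁ : Matrix (Fin 2) (Fin 2) ℂ) *
            (A₂ : Matrix (Fin 2) (Fin 2) ℂ))).re := by
          simp [Complex.conj_re]
        rw [this, htrM]
        simp [Complex.add_re, Complex.mul_re, Complex.neg_re, Complex.neg_im,
          Complex.conj_re, Complex.conj_im]
        ring
      rw [← h1, h2]
    have hrr : r.re = a.re * p.re - a.im * p.im - (b.re * q.re + b.im * q.im) := by linarith
    have hg1 : goldman A₁ = Real.arccos a.re / Real.pi := by
      unfold goldman
      rw [htr1]
      norm_num [Complex.add_re, Complex.conj_re]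
    have hg2 : goldman A₂ = Real.arccos p.re / Real.pi := by
      unfold goldman
      rw [htr2]
      norm_num [Complex.add_re, Complex.conj_re]
    have hg3 : goldman A₃ = Real.arccos r.re / Real.pi := by
      unfold goldman
      rw [htr3]
      norm_num [Complex.add_re, Complex.conj_re]
    clear hEq hEq' hM hA₃ e1a e1b e2a e2b e3a e3b ha hb hp hq hr hw htr1 htr2 htr3 htr3M htrM hre3
    have hn1 : a.re ^ 2 + a.im ^ 2 + (b.re ^ 2 + b.im ^ 2) = 1 := by
      have := e1c
      rw [Complex.normSq_apply, Complex.normSq_apply] at this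
      nlinarith [this]
    have hn2 : p.re ^ 2 + p.im ^ 2 + (q.re ^ 2 + q.im ^ 2) = 1 := by
      have := e2c
      rw [Complex.normSq_apply, Complex.normSq_apply] at this
      nlinarith [this]
    have hn3 : r.re ^ 2 ≤ 1 := by
      have := e3c
      rw [Complex.normSq_apply, Complex.normSq_apply] at this
      nlinarith [this, sq_nonneg r.im, sq_nonneg w.re, sq_nonneg w.im]
    have hc1 : |a.re| ≤ 1 := by
      rw [abs_le]; constructor <;> nlinarith [sq_nonneg a.im, sq_nonneg b.re, sq_nonneg b.im]
    have hc2 : |p.re| ≤ 1 := by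
      rw [abs_le]; constructor <;> nlinarith [sq_nonneg p.im, sq_nonneg q.re, sq_nonneg q.im]
    have hc3 : |r.re| ≤ 1 := by
      rw [abs_le]; constructor <;> nlinarith [hn3]
    -- the symmetric inequality
    have hsym : (r.re - a.re * p.re) ^ 2 ≤ (1 - a.re ^ 2) * (1 - p.re ^ 2) := by
      rw [hrr]
      nlinarith [sq_nonneg (a.im * q.re - b.re * p.im), sq_nonneg (a.im * q.im - b.im * p.im),
        sq_nonneg (b.re * q.im - b.im * q.re), hn1, hn2]
    have hsym12 : (a.re - p.re * r.re) ^ 2 ≤ (1 - p.re ^ 2) * (1 - r.re ^ 2) := by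
      nlinarith [hsym]
    have hsym13 : (p.re - a.re * r.re) ^ 2 ≤ (1 - a.re ^ 2) * (1 - r.re ^ 2) := by
      nlinarith [hsym]
    -- goldman values
    constructor
    · intro i
      fin_cases i
      · show 0 ≤ goldman A₁ ∧ goldman A₁ ≤ 1
        rw [hg1]
        exact ⟨div_nonneg (Real.arccos_nonneg _) hπ.le,
          (div_le_one hπ).mpr (Real.arccos_le_pi _)⟩
      · show 0 ≤ goldman A₂ ∧ goldman A₂ ≤ 1
        rw [hg2]
        exact ⟨div_nonneg (Real.arccos_nonneg _) hπ.le,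
          (div_le_one hπ).mpr (Real.arccos_le_pi _)⟩
      · show 0 ≤ goldman A₃ ∧ goldman A₃ ≤ 1
        rw [hg3]
        exact ⟨div_nonneg (Real.arccos_nonneg _) hπ.le,
          (div_le_one hπ).mpr (Real.arccos_le_pi _)⟩
    refine ⟨?_, ?_, ?_, ?_⟩
    · show goldman A₃ ≤ goldman A₁ + goldman A₂
      rw [hg1, hg2, hg3, ← add_div, div_le_div_iff_of_pos_right hπ]
      exact tri_arccos hc1 hc2 hsym
    · show goldman A₁ ≤ goldman A₂ + goldman A₃
      rw [hg1, hg2, hg3, ← add_div, div_le_div_iff_of_pos_right hπ]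
      exact tri_arccos hc2 hc3 hsym12
    · show goldman A₂ ≤ goldman A₁ + goldman A₃
      rw [hg1, hg2, hg3, ← add_div, div_le_div_iff_of_pos_right hπ]
      exact tri_arccos hc1 hc3 hsym13
    · show goldman A₁ + goldman A₂ + goldman A₃ ≤ 2
      rw [hg1, hg2, hg3, ← add_div, ← add_div, div_le_iff₀ hπ]
      have := sum_arccos hc1 hc2 hsym
      linarith
  · -- reverse direction
    intro t ht
    obtain ⟨hb, h01, h02, h03, hsum⟩ := ht
    have hθ : ∀ i, 0 ≤ Real.pi * t i ∧ Real.pi * t i ≤ Real.pi := by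
      intro i
      obtain ⟨hb1, hb2⟩ := hb i
      constructor
      · positivity
      · nlinarith
    have hineq := delta_to_ineq (hθ 0).1 (hθ 0).2 (hθ 1).1 (hθ 1).2 (hθ 2).1 (hθ 2).2
      (by nlinarith) (by nlinarith) (by nlinarith) (by nlinarith)
    obtain ⟨A₁, A₂, A₃, hprod, ht1, ht2, ht3⟩ :=
      su2_construct (Real.abs_cos_le_one _) (Real.abs_cos_le_one _) hineq
    exact ⟨A₁, A₂, A₃, hprod, ht1, ht2, ht3⟩
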